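/- arXiv:2203.08070 — 5 statements merged into one kernel-verified Lean document; each statement's English description precedes it below -/
import Mathlib

section
/- If G admits a Γ-switchable homomorphism to H, then for any vertex v of H and any π ∈ Γ, G admits a Γ-switchable homomorphism to H^{(v,π)}. Explicitly: if Σ is a switching sequence and f: G^Σ → H is a homomorphism of (m,n)-mixed graphs, then the same vertex map f gives a homomorphism (G^Σ)^{(X,π)} → H^{(v,π)}, where X = f⁻¹(v). -/
open Equiv

/-- An `(m,n)`-mixed graph (with labelled vertex set `V`): `edge u v = some i` records an
edge `uv` of colour `i` (stored symmetrically) and `arc u v = some j` records an arc from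
`u` to `v` of colour `j`. -/
structure Mixed (V : Type) (m n : ℕ) where
  edge : V → V → Option (Fin m)
  arc : V → V → Option (Fin n)

/-- An element of the switching group `S_m × (S_n ⋉ S_2ⁿ)`: a permutation `α` of the edge
colours together with a permutation `σ` of (arc colour, arc direction) pairs; a pair
`(i, b)` records an arc of colour `i` whose direction agrees (`b = true`) or disagrees
(`b = false`) with a reference orientation. -/
abbrev SwElt (m n : ℕ) := Perm (Fin m) × Perm (Fin n × Bool)

/-- The permutation `σ` of (arc colour, direction) pairs comes from a pair
`(β, γ₁, …, γₙ) ∈ S_n × S_2ⁿ`, i.e. the new arc colour does not depend on the direction: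
`σ (i, d) = (β i, γᵢ d)`. -/
def Consistent {n : ℕ} (σ : Perm (Fin n × Bool)) : Prop :=
  ∀ i : Fin n, (σ (i, true)).1 = (σ (i, false)).1

/-- Given the arc entries `a = arc x y` and `b = arc y x`, the new entry `arc x y`
after acting by `σ` on (colour, direction relative to `(x,y)`) pairs. -/
def arcSwitch {n : ℕ} (σ : Perm (Fin n × Bool)) (a b : Option (Fin n)) : Option (Fin n) :=
  match a with
  | some i => if (σ (i, true)).2 = true then some (σ (i, true)).1 else none
  | none =>
    match b with
    | some i => if (σ (i, false)).2 = true then some (σ (i, false)).1 else none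
    | none => none

/-- Switching the mixed graph `G` at the vertex `v` with respect to `π`: edge colours of
incident edges change by `π.1`, and colours and directions of incident arcs change by
`π.2`. -/
def Mixed.switch {V : Type} [DecidableEq V] {m n : ℕ} (G : Mixed V m n) (v : V)
    (π : SwElt m n) : Mixed V m n where
  edge x y := if x = v ∨ y = v then (G.edge x y).map π.1 else G.edge x y
  arc x y := if x = v ∨ y = v then arcSwitch π.2 (G.arc x y) (G.arc y x) else G.arc x y

/-- Switching with respect to a sequence of (vertex, group element) pairs, in order. -/
def Mixed.switchSeq {V : Type} [DecidableEq V] {m n : ℕ} (G : Mixed V m n) :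
    List (V × SwElt m n) → Mixed V m n
  | [] => G
  | (v, π) :: rest => (G.switch v π).switchSeq rest

/-- All group elements occurring in the sequence belong to `Γ`. -/
def MValid {V : Type} {m n : ℕ} (Γ : Subgroup (SwElt m n))
    (L : List (V × SwElt m n)) : Prop :=
  ∀ p ∈ L, p.2 ∈ Γ

/-- `G` is a bona fide mixed graph: loop-free, edges stored symmetrically, and any pair
of vertices is joined by at most one edge or one arc (but not both). -/
def Mixed.Proper {V : Type} {m n : ℕ} (G : Mixed V m n) : Prop :=
  (∀ x, G.edge x x = none) ∧ (∀ x, G.arc x x = none) ∧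
  (∀ x y, G.edge x y = G.edge y x) ∧
  (∀ x y, (G.edge x y).isSome → G.arc x y = none ∧ G.arc y x = none) ∧
  (∀ x y, (G.arc x y).isSome → G.arc y x = none)

/-- A homomorphism of `(m,n)`-mixed graphs: preserves edges with their colours, and arcs
with their colours and directions. -/
def MHom {V W : Type} {m n : ℕ} (f : V → W) (G : Mixed V m n) (H : Mixed W m n) : Prop :=
  (∀ u v j, G.edge u v = some j → H.edge (f u) (f v) = some j) ∧
  (∀ u v j, G.arc u v = some j → H.arc (f u) (f v) = some j)

/-- A `Γ`-switchable homomorphism of `G` to `H`: a switching sequence on `G` with all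
elements in `Γ`, followed by a homomorphism of mixed graphs. -/
def MSwHom {V W : Type} [DecidableEq V] {m n : ℕ} (Γ : Subgroup (SwElt m n))
    (G : Mixed V m n) (H : Mixed W m n) : Prop :=
  ∃ L, MValid Γ L ∧ ∃ f : V → W, MHom f (G.switchSeq L) H

/-- The (colour, direction) state of the pair `(u,v)` of vertices: `some (i, true)` if
there is an arc `u → v` of colour `i`, `some (i, false)` if there is an arc `v → u` of
colour `i`. -/
def arcPair {V : Type} {m n : ℕ} (G : Mixed V m n) (u v : V) : Option (Fin n × Bool) :=
  match G.arc u v with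
  | some i => some (i, true)
  | none => (G.arc v u).map (fun i => (i, false))


/-! Switching at every vertex of `X = f⁻¹(v)` with the same `π` acts on the pair `{x, y}` by
`π` raised to the number of its endpoints in `X`. As `H` is loop-free, no edge or arc of `G^Σ`
has both ends in `X`, so it is switched exactly once if its image meets `v` and not at all
otherwise, which is precisely how `H^{(v,π)}` arises from `H`. For arcs one follows the
(colour, direction) state `arcPair` of a pair: when `π.2` is consistent and there are no
opposite arcs, switching acts on that state by the permutation `π.2`. -/

/-- `arcPair` as a function of the two entries `arc u v` and `arc v u`. -/
def arcState {n : ℕ} (a b : Option (Fin n)) : Option (Fin n × Bool) :=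
  match a with
  | some i => some (i, true)
  | none => b.map (fun i => (i, false))

lemma arcPair_eq_arcState {V : Type} {m n : ℕ} (K : Mixed V m n) (u v : V) :
    arcPair K u v = arcState (K.arc u v) (K.arc v u) := rfl

def Mixed.NoDigon {V : Type} {m n : ℕ} (K : Mixed V m n) : Prop :=
  ∀ x y, K.arc x y = none ∨ K.arc y x = none

lemma Consistent.apply_false {n : ℕ} {σ : Perm (Fin n × Bool)} (hσ : Consistent σ)
    (i : Fin n) : σ (i, false) = ((σ (i, true)).1, !(σ (i, true)).2) := by
  have hfst : (σ (i, false)).1 = (σ (i, true)).1 := (hσ i).symm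
  have hne : σ (i, false) ≠ σ (i, true) := σ.injective.ne (by simp)
  exact Prod.ext hfst (Bool.eq_not_iff.mpr fun hsnd => hne (Prod.ext hfst hsnd))

lemma List.Nodup.countP_eq_or_eq {α : Type} [DecidableEq α] {l : List α} (hl : l.Nodup)
    {x y : α} (hxy : ¬(x ∈ l ∧ y ∈ l)) :
    l.countP (fun w => x = w ∨ y = w) = if x ∈ l ∨ y ∈ l then 1 else 0 := by
  induction l with
  | nil => simp
  | cons a l ih =>
    obtain ⟨ha, hl⟩ := List.nodup_cons.mp hl
    rw [List.countP_cons, ih hl (fun h => hxy ⟨.tail _ h.1, .tail _ h.2⟩)]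
    by_cases hx : x = a <;> by_cases hy : y = a <;> simp_all

section ArcSwitch

variable {n : ℕ} {σ : Perm (Fin n × Bool)} {a b : Option (Fin n)}

lemma arcState_arcSwitch (hσ : Consistent σ) (hab : a = none ∨ b = none) :
    arcState (arcSwitch σ a b) (arcSwitch σ b a) = (arcState a b).map σ := by
  rcases hab with rfl | rfl
  · rcases b with _ | i
    · rfl
    · simp only [arcSwitch, arcState, Option.map_some, hσ.apply_false]
      rcases σ (i, true) with ⟨c, _ | _⟩ <;> rfl
  · rcases a with _ | i
    · rfl
    · simp only [arcSwitch, arcState, Option.map_some, hσ.apply_false]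
      rcases σ (i, true) with ⟨c, _ | _⟩ <;> rfl

lemma arcSwitch_eq_none_or (hσ : Consistent σ) (hab : a = none ∨ b = none) :
    arcSwitch σ a b = none ∨ arcSwitch σ b a = none := by
  rcases hab with rfl | rfl
  · rcases b with _ | i
    · simp [arcSwitch]
    · simp only [arcSwitch, hσ.apply_false]
      rcases σ (i, true) with ⟨c, _ | _⟩ <;> simp
  · rcases a with _ | i
    · simp [arcSwitch]
    · simp only [arcSwitch, hσ.apply_false]
      rcases σ (i, true) with ⟨c, _ | _⟩ <;> simp

end ArcSwitch

section Switching

variable {V : Type} [DecidableEq V] {m n : ℕ} {K : Mixed V m n} {π : SwElt m n}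

lemma Mixed.NoDigon.switch (hK : K.NoDigon) (hπ : Consistent π.2) (v : V) :
    (K.switch v π).NoDigon := by
  intro x y
  by_cases hxy : x = v ∨ y = v
  · simpa only [Mixed.switch, if_pos hxy, if_pos hxy.symm] using
      arcSwitch_eq_none_or hπ (hK x y)
  · simpa only [Mixed.switch, if_neg hxy, if_neg (mt Or.symm hxy)] using hK x y

lemma arcPair_switch (hK : K.NoDigon) (hπ : Consistent π.2) (v x y : V) :
    arcPair (K.switch v π) x y =
      if x = v ∨ y = v then (arcPair K x y).map π.2 else arcPair K x y := by
  by_cases hxy : x = v ∨ y = v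
  · simpa only [arcPair_eq_arcState, Mixed.switch, if_pos hxy, if_pos hxy.symm] using
      arcState_arcSwitch hπ (hK x y)
  · simp only [arcPair_eq_arcState, Mixed.switch, if_neg hxy, if_neg (mt Or.symm hxy)]

lemma Mixed.switchSeq_append (K : Mixed V m n) (L M : List (V × SwElt m n)) :
    K.switchSeq (L ++ M) = (K.switchSeq L).switchSeq M := by
  induction L generalizing K with
  | nil => rfl
  | cons p L ih => exact ih _

lemma edge_switchSeq_const (K : Mixed V m n) (π : SwElt m n) (l : List V) (x y : V) :
    (K.switchSeq (l.map (·, π))).edge x y =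
      (K.edge x y).map ⇑(π.1 ^ l.countP (fun w => x = w ∨ y = w)) := by
  induction l generalizing K with
  | nil => simp [Mixed.switchSeq]
  | cons a l ih =>
    rw [List.map_cons, Mixed.switchSeq, ih, List.countP_cons, pow_add]
    by_cases hxy : x = a ∨ y = a <;> simp [Mixed.switch, hxy, Option.map_map]

lemma arcPair_switchSeq_const (hK : K.NoDigon) (hπ : Consistent π.2) (l : List V) (x y : V) :
    arcPair (K.switchSeq (l.map (·, π))) x y =
      (arcPair K x y).map ⇑(π.2 ^ l.countP (fun w => x = w ∨ y = w)) := by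
  induction l generalizing K with
  | nil => simp [Mixed.switchSeq]
  | cons a l ih =>
    rw [List.map_cons, Mixed.switchSeq, ih (hK.switch hπ a), List.countP_cons, pow_add,
      arcPair_switch hK hπ]
    by_cases hxy : x = a ∨ y = a <;> simp [hxy, Option.map_map]

end Switching

section Hom

variable {V W : Type} {m n : ℕ} {K : Mixed V m n} {H : Mixed W m n} {f : V → W}

lemma Mixed.Proper.noDigon (hH : H.Proper) : H.NoDigon := by
  intro x y
  cases hxy : H.arc x y
  · exact .inl rfl
  · exact .inr (hH.2.2.2.2 x y (by simp [hxy]))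

lemma arcPair_eq_some_true_iff {x y : V} {j : Fin n} :
    arcPair K x y = some (j, true) ↔ K.arc x y = some j := by
  rw [arcPair_eq_arcState]
  cases K.arc x y <;> simp [arcState]

lemma MHom.noDigon (hf : MHom f K H) (hH : H.NoDigon) : K.NoDigon := by
  intro x y
  by_contra! h
  obtain ⟨i, hi⟩ := Option.ne_none_iff_exists'.mp h.1
  obtain ⟨j, hj⟩ := Option.ne_none_iff_exists'.mp h.2
  rcases hH (f x) (f y) with h' | h' <;> simp [hf.2 _ _ _ hi, hf.2 _ _ _ hj] at h'

lemma MHom.map_arcPair (hf : MHom f K H) (hH : H.NoDigon) {x y : V} {p : Fin n × Bool}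
    (h : arcPair K x y = some p) : arcPair H (f x) (f y) = some p := by
  rw [arcPair_eq_arcState] at h ⊢
  cases hxy : K.arc x y with
  | some i => simp_all [arcState, hf.2 x y i hxy]
  | none =>
    cases hyx : K.arc y x with
    | some i =>
      have hHyx := hf.2 y x i hyx
      have hHxy : H.arc (f x) (f y) = none := (hH (f y) (f x)).resolve_left (by simp [hHyx])
      simp_all [arcState]
    | none => simp_all [arcState]

lemma MHom.of_arcPair
    (hedge : ∀ x y j, K.edge x y = some j → H.edge (f x) (f y) = some j)
    (harc : ∀ x y p, arcPair K x y = some p → arcPair H (f x) (f y) = some p) :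
    MHom f K H :=
  ⟨hedge, fun x y _ h =>
    arcPair_eq_some_true_iff.mp (harc x y _ (arcPair_eq_some_true_iff.mpr h))⟩

end Hom

theorem MHom.switchSeq_fiber {V W : Type} [DecidableEq V] [DecidableEq W] {m n : ℕ}
    {K : Mixed V m n} {H : Mixed W m n} {f : V → W} (hf : MHom f K H) (hH : H.Proper)
    {π : SwElt m n} (hπ : Consistent π.2) {v : W} {l : List V} (hl : l.Nodup)
    (hmem : ∀ w, w ∈ l ↔ f w = v) :
    MHom f (K.switchSeq (l.map (·, π))) (H.switch v π) := by
  have hcount : ∀ x y, ¬(f x = v ∧ f y = v) →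
      l.countP (fun w => x = w ∨ y = w) = if f x = v ∨ f y = v then 1 else 0 := by
    intro x y hxy
    simpa only [hmem] using hl.countP_eq_or_eq (x := x) (y := y) (by simpa only [hmem] using hxy)
  refine MHom.of_arcPair ?_ ?_
  · intro x y j hj
    rw [edge_switchSeq_const] at hj
    obtain ⟨i, hi, rfl⟩ := Option.map_eq_some_iff.mp hj
    have hHi := hf.1 x y i hi
    have hfib : ¬(f x = v ∧ f y = v) := by
      rintro ⟨hx, hy⟩
      simp [hx, hy, hH.1] at hHi
    simp only [Mixed.switch, hcount x y hfib, hHi]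
    split_ifs <;> simp
  · intro x y p hp
    rw [arcPair_switchSeq_const (hf.noDigon hH.noDigon) hπ] at hp
    obtain ⟨q, hq, rfl⟩ := Option.map_eq_some_iff.mp hp
    have hHq := hf.map_arcPair hH.noDigon hq
    have hfib : ¬(f x = v ∧ f y = v) := by
      rintro ⟨hx, hy⟩
      simp [hx, hy, arcPair, hH.2.1] at hHq
    rw [arcPair_switch hH.noDigon hπ, hcount x y hfib, hHq]
    split_ifs <;> simp

/-- If `f : G^Σ → H` is a homomorphism, `v ∈ V(H)` and `π ∈ Γ`, then the
same vertex map is a homomorphism `(G^Σ)^{(X,π)} → H^{(v,π)}` where `X = f⁻¹(v)`; in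
particular `G` admits a `Γ`-switchable homomorphism to `H^{(v,π)}`. -/
theorem swhom_target_switch {V W : Type} [Fintype V] [DecidableEq V] [DecidableEq W]
    {m n : ℕ} (Γ : Subgroup (SwElt m n)) (hΓ : ∀ p ∈ Γ, Consistent p.2)
    (G : Mixed V m n) (H : Mixed W m n) (hH : H.Proper)
    (L : List (V × SwElt m n)) (hL : MValid Γ L) (f : V → W)
    (hhom : MHom f (G.switchSeq L) H) (v : W) (π : SwElt m n) (hπ : π ∈ Γ) :
    MHom f ((G.switchSeq L).switchSeq
        (((Finset.univ.filter (fun x => f x = v)).toList).map (fun x => (x, π))))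
      (H.switch v π)
    ∧ MSwHom Γ G (H.switch v π) := by
  have hfiber := hhom.switchSeq_fiber (v := v) hH (hΓ π hπ)
    (Finset.nodup_toList (Finset.univ.filter (fun x => f x = v))) (by simp)
  refine ⟨hfiber, L ++ _, ?_, f, by rwa [Mixed.switchSeq_append]⟩
  simpa [MValid, or_imp, forall_and, hπ] using hL
end

section
/- For each even cycle length 2k ≥ 4 and each i,j ∈ [m], define j ∼_{2k} i iff the cycle of length 2k with 2k−1 edges of colour i and one edge of colour j is Γ-switch equivalent to a monochromatic cycle of colour i. Then ∼_{2k} is an equivalence relation on [m]. -/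
open Equiv

/-- An `m`-edge-coloured graph on vertex set `V`: `G u v = some i` means there is an
edge `uv` of colour `i` (stored symmetrically), `none` means no edge. -/
abbrev EC (V : Type) (m : ℕ) := V → V → Option (Fin m)

/-- The colouring is stored symmetrically. -/
def ECSymm {V : Type} {m : ℕ} (G : EC V m) : Prop := ∀ u v, G u v = G v u

/-- Switching at a vertex `v` with a permutation `π` of the colours. -/
def ECswitch {V : Type} [DecidableEq V] {m : ℕ} (G : EC V m) (v : V) (π : Perm (Fin m)) :
    EC V m :=
  fun x y => if x = v ∨ y = v then (G x y).map π else G x y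

/-- Switching with respect to a sequence of (vertex, permutation) pairs, applied in order. -/
def ECswitchSeq {V : Type} [DecidableEq V] {m : ℕ} (G : EC V m) :
    List (V × Perm (Fin m)) → EC V m
  | [] => G
  | (v, π) :: rest => ECswitchSeq (ECswitch G v π) rest

/-- All permutations occurring in the sequence belong to the group `Γ`. -/
def ValidSeq {V : Type} {m : ℕ} (Γ : Subgroup (Perm (Fin m)))
    (L : List (V × Perm (Fin m))) : Prop :=
  ∀ p ∈ L, p.2 ∈ Γ

/-- `Γ`-switch equivalence of two `m`-edge-coloured graphs on the same vertex set. -/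
def SwEquiv {V : Type} [DecidableEq V] {m : ℕ} (Γ : Subgroup (Perm (Fin m)))
    (G G' : EC V m) : Prop :=
  ∃ L, ValidSeq Γ L ∧ ECswitchSeq G L = G'

/-- `G` is monochromatic of colour `i`. -/
def Mono {V : Type} {m : ℕ} (G : EC V m) (i : Fin m) : Prop :=
  ∀ u v j, G u v = some j → j = i

/-- `G` admits a `Γ`-switchable homomorphism to `K₂^i` (the single edge of colour `i`). -/
def SwHomK2 {V : Type} [DecidableEq V] {m : ℕ} (Γ : Subgroup (Perm (Fin m)))
    (G : EC V m) (i : Fin m) : Prop :=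
  ∃ L, ValidSeq Γ L ∧ ∃ f : V → Bool,
    ∀ u v j, ECswitchSeq G L u v = some j → f u ≠ f v ∧ j = i

/-- A `Γ`-switchable homomorphism between `m`-edge-coloured graphs. -/
def SwHom {V W : Type} [DecidableEq V] {m : ℕ} (Γ : Subgroup (Perm (Fin m)))
    (G : EC V m) (H : EC W m) : Prop :=
  ∃ L, ValidSeq Γ L ∧ ∃ f : V → W,
    ∀ u v j, ECswitchSeq G L u v = some j → H (f u) (f v) = some j

/-- `Γ` acts transitively on the colour set `[m]`. -/
def TransOn {m : ℕ} (Γ : Subgroup (Perm (Fin m))) : Prop :=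
  ∀ i j : Fin m, ∃ π ∈ Γ, π i = j

/-- `G` is bipartite. -/
def Bip {V : Type} {m : ℕ} (G : EC V m) : Prop :=
  ∃ g : V → Bool, ∀ u v, (G u v).isSome → g u ≠ g v

/-- `G` (its underlying graph) is connected. -/
def Conn {V : Type} {m : ℕ} (G : EC V m) : Prop :=
  ∀ u v : V, Relation.ReflTransGen (fun a b => (G a b).isSome) u v

/-- The `m`-edge-coloured cycle of length `n` on `ZMod n`, where the edge from `x` to
`x + 1` has colour `c x`. -/
def cycleFromFn {m : ℕ} (n : ℕ) (c : ZMod n → Fin m) : EC (ZMod n) m :=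
  fun x y => if y = x + 1 then some (c x) else if x = y + 1 then some (c y) else none

/-- The cycle of length `n` that is nearly monochromatic of colours `(i, j)`:
all edges have colour `i` except the edge from `-1` (that is, `n - 1`) to `0`,
which has colour `j`. -/
def nearCycle {m : ℕ} (n : ℕ) (i j : Fin m) : EC (ZMod n) m :=
  cycleFromFn n (fun x => if x = -1 then j else i)

/-- The monochromatic cycle of length `n` of colour `i`. -/
def monoCycle {m : ℕ} (n : ℕ) (i : Fin m) : EC (ZMod n) m :=
  cycleFromFn n (fun _ => i)

/-- The `Γ`-substitution class `⟨i⟩`: the colours `j` such that the `4`-cycle nearly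
monochromatic of colours `(i, j)` can be switched to be monochromatic of colour `i`. -/
def subClass {m : ℕ} (Γ : Subgroup (Perm (Fin m))) (i : Fin m) : Set (Fin m) :=
  {j | SwEquiv Γ (nearCycle 4 i j) (monoCycle 4 i)}

/-- The underlying simple graph of an `m`-edge-coloured graph. -/
def ECtoSimple {V : Type} {m : ℕ} (G : EC V m) (h : ECSymm G) : SimpleGraph V where
  Adj u v := u ≠ v ∧ (G u v).isSome
  symm := by
    constructor
    intro u v hv
    exact ⟨Ne.symm hv.1, by rw [h v u]; exact hv.2⟩
  loopless := by constructor; intro v hv; exact hv.1 rfl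

/-- The number of edges of an `m`-edge-coloured graph. -/
def edgeCount {V : Type} [Fintype V] {m : ℕ} (G : EC V m) : ℕ :=
  (Finset.univ.filter (fun p : V × V => (G p.1 p.2).isSome)).card / 2

/-!
Switching the cycle on `ZMod n` along a sequence of switches changes the colour of each edge `x`
by a permutation `w x ∈ Γ`. For even `n`, give the edges alternating signs: a single switch
changes two adjacent edges by the same permutation, so `∏ (w x) ^ (±1)` is trivial in the
abelianization of `Γ`. If the nearly monochromatic cycle of colours `(i, j)` switches to the
monochromatic one, every `w x` with `x ≠ -1` fixes `i`, hence `w (-1) ∈ Stab(i) · [Γ, Γ]`, and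
`w (-1) j = i` puts `j` in the `[Γ, Γ]`-orbit of `i`. Conversely, a commutator `⁅p, q⁆` can be
applied to a single edge by switching its two endpoints. So `∼_{2k}` is the orbit relation
of `[Γ, Γ]`.
-/

open scoped commutatorElement

namespace CycleSwitching

section EdgeWord

variable {G : Type*} [Group G] {n : ℕ}

/-- Edge `x` of the cycle on `ZMod n` joins `x` and `x + 1`, so switching at `v` acts on
exactly the edges `v - 1` and `v`. -/
def edgeFactor (v : ZMod n) (π : G) (x : ZMod n) : G :=
  if x = v ∨ x + 1 = v then π else 1

def edgeWord : List (ZMod n × G) → ZMod n → G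
  | [], _ => 1
  | (v, π) :: L, x => edgeWord L x * edgeFactor v π x

lemma edgeFactor_inv (v : ZMod n) (π : G) (x : ZMod n) :
    edgeFactor v π⁻¹ x = (edgeFactor v π x)⁻¹ := by
  unfold edgeFactor
  split_ifs <;> simp

lemma edgeWord_append (L₁ L₂ : List (ZMod n × G)) (x : ZMod n) :
    edgeWord (L₁ ++ L₂) x = edgeWord L₂ x * edgeWord L₁ x := by
  induction L₁ with
  | nil => simp [edgeWord]
  | cons p L₁ ih => simp [edgeWord, ih, mul_assoc]

def invSeq (L : List (ZMod n × G)) : List (ZMod n × G) :=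
  (L.map fun p => (p.1, p.2⁻¹)).reverse

lemma edgeWord_invSeq (L : List (ZMod n × G)) (x : ZMod n) :
    edgeWord (invSeq L) x = (edgeWord L x)⁻¹ := by
  induction L with
  | nil => simp [invSeq, edgeWord]
  | cons p L ih =>
    obtain ⟨v, π⟩ := p
    rw [show invSeq ((v, π) :: L) = invSeq L ++ [(v, π⁻¹)] by simp [invSeq], edgeWord_append, ih]
    simp [edgeWord, edgeFactor_inv]

lemma edgeWord_map {H : Type*} [Group H] (f : G →* H) (L : List (ZMod n × G)) (x : ZMod n) :
    edgeWord (L.map (Prod.map id f)) x = f (edgeWord L x) := by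
  induction L with
  | nil => simp [edgeWord]
  | cons p L ih =>
    simp only [List.map_cons, edgeWord, Prod.map_fst, Prod.map_snd, id, ih, map_mul, edgeFactor]
    split_ifs <;> simp

lemma edgeWord_commutator {u v x : ZMod n} (p q : G) :
    edgeWord [(u, q⁻¹), (v, p⁻¹), (u, q), (v, p)] x = ⁅edgeFactor v p x, edgeFactor u q x⁆ := by
  simp [edgeWord, edgeFactor_inv, commutatorElement_def, mul_assoc]

/-- The sign `(-1)^x` of an edge, well defined because `n` is even. -/
def altSign (hn : 2 ∣ n) (x : ZMod n) : ℤ :=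
  if ZMod.castHom hn (ZMod 2) x = 0 then 1 else -1

lemma isUnit_altSign (hn : 2 ∣ n) (x : ZMod n) : IsUnit (altSign hn x) := by
  unfold altSign
  split_ifs <;> simp

lemma altSign_sub_one_add_altSign (hn : 2 ∣ n) (v : ZMod n) :
    altSign hn (v - 1) + altSign hn v = 0 := by
  unfold altSign
  rw [map_sub, map_one]
  rcases (by decide : ∀ b : ZMod 2, b = 0 ∨ b = 1) (ZMod.castHom hn (ZMod 2) v) with hb | hb <;>
    rw [hb] <;> decide

variable [NeZero n] {A : Type*} [CommGroup A]

/-- The two edges hit by a switch carry opposite signs. -/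
lemma prod_edgeFactor_zpow_altSign (hn : 2 ∣ n) (φ : G →* A) (v : ZMod n) (π : G) :
    ∏ x, φ (edgeFactor v π x) ^ altSign hn x = 1 := by
  have : Fact (1 < n) := ⟨by have := Nat.le_of_dvd (Nat.pos_of_neZero n) hn; omega⟩
  rw [Fintype.prod_eq_mul (v - 1) v (pred_ne_self v)]
  · simp [edgeFactor, ← zpow_add, altSign_sub_one_add_altSign]
  · rintro x ⟨hx₁, hx₂⟩
    have : ¬(x = v ∨ x + 1 = v) := by rw [← eq_sub_iff_add_eq]; tauto
    simp [edgeFactor, this]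

lemma prod_edgeWord_zpow_altSign (hn : 2 ∣ n) (φ : G →* A) (L : List (ZMod n × G)) :
    ∏ x, φ (edgeWord L x) ^ altSign hn x = 1 := by
  induction L with
  | nil => simp [edgeWord]
  | cons p L ih =>
    simp only [edgeWord, map_mul, mul_zpow, Finset.prod_mul_distrib, ih,
      prod_edgeFactor_zpow_altSign, mul_one]

end EdgeWord

section Cycle

variable {m n : ℕ}

lemma ECswitch_cycleFromFn (c : ZMod n → Fin m) (v : ZMod n) (π : Perm (Fin m)) :
    ECswitch (cycleFromFn n c) v π = cycleFromFn n fun x => edgeFactor v π x (c x) := by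
  funext x y
  simp only [ECswitch, cycleFromFn, edgeFactor]
  split_ifs <;> simp_all

lemma ECswitchSeq_cycleFromFn (L : List (ZMod n × Perm (Fin m))) (c : ZMod n → Fin m) :
    ECswitchSeq (cycleFromFn n c) L = cycleFromFn n fun x => edgeWord L x (c x) := by
  induction L generalizing c with
  | nil => rfl
  | cons p L ih =>
    obtain ⟨v, π⟩ := p
    rw [ECswitchSeq, ECswitch_cycleFromFn, ih]
    rfl

lemma cycleFromFn_injective : Function.Injective (cycleFromFn (m := m) n) := by
  intro c c' h
  funext x
  simpa [cycleFromFn] using congrFun (congrFun h x) (x + 1)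

end Cycle

lemma mem_sup_commutator_of_prod_zpow_eq_one {G ι : Type*} [Group G] [Fintype ι]
    [DecidableEq ι] {H : Subgroup G} {w : ι → G} {s : ι → ℤ} {x₀ : ι} (hs : IsUnit (s x₀))
    (hw : ∀ x ≠ x₀, w x ∈ H) (hprod : ∏ x, Abelianization.of (w x) ^ s x = 1) :
    w x₀ ∈ H ⊔ commutator G := by
  rw [← Abelianization.ker_of, ← Subgroup.comap_map_eq, Subgroup.mem_comap]
  have hrest : ∏ x ∈ Finset.univ.erase x₀, Abelianization.of (w x) ^ s x ∈
      H.map Abelianization.of :=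
    Subgroup.prod_mem _ fun x hx =>
      zpow_mem (Subgroup.mem_map_of_mem _ (hw x (Finset.ne_of_mem_erase hx))) _
  rw [← Finset.mul_prod_erase _ _ (Finset.mem_univ x₀)] at hprod
  have hzpow : Abelianization.of (w x₀) ^ s x₀ ∈ H.map Abelianization.of := by
    rw [eq_inv_of_mul_eq_one_left hprod]
    exact inv_mem hrest
  rcases Int.isUnit_iff.mp hs with h | h <;> simpa [h] using hzpow

lemma exists_map_subtype_eq_of_validSeq {V : Type} {m : ℕ} {Γ : Subgroup (Perm (Fin m))}
    {L : List (V × Perm (Fin m))} (hL : ValidSeq Γ L) :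
    ∃ L' : List (V × Γ), L'.map (Prod.map id Γ.subtype) = L := by
  induction L with
  | nil => exact ⟨[], rfl⟩
  | cons p L ih =>
    obtain ⟨L', hL'⟩ := ih fun q hq => hL q (List.mem_cons_of_mem _ hq)
    exact ⟨(p.1, ⟨p.2, hL p List.mem_cons_self⟩) :: L', by rw [List.map_cons, hL']; rfl⟩

section Orbit

variable {m n : ℕ} {Γ : Subgroup (Perm (Fin m))}

def singleEdgeSubgroup (Γ : Subgroup (Perm (Fin m))) (e : ZMod n) : Subgroup (Perm (Fin m)) where
  carrier := {g | ∃ L, ValidSeq Γ L ∧ edgeWord L = Pi.mulSingle e g}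
  one_mem' := ⟨[], by simp [ValidSeq], by funext x; simp [edgeWord]⟩
  mul_mem' := by
    rintro a b ⟨L₁, hL₁, ha⟩ ⟨L₂, hL₂, hb⟩
    refine ⟨L₂ ++ L₁, fun p hp => ?_, ?_⟩
    · rcases List.mem_append.mp hp with hp | hp
      exacts [hL₂ p hp, hL₁ p hp]
    · funext x
      rw [edgeWord_append, ha, hb, Pi.mulSingle_mul, Pi.mul_apply]
  inv_mem' := by
    rintro g ⟨L, hL, hg⟩
    refine ⟨invSeq L, fun p hp => ?_, ?_⟩
    · obtain ⟨q, hq, rfl⟩ := List.mem_map.mp (List.mem_reverse.mp hp)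
      exact inv_mem (hL q hq)
    · funext x
      rw [edgeWord_invSeq, hg, Pi.mulSingle_inv, Pi.inv_apply]

/-- A commutator `⁅p, q⁆` is applied to the edge `-1` alone by switching at its endpoints `-1`
and `0` with `q⁻¹, p⁻¹, q, p`. -/
lemma commutator_le_comap_singleEdgeSubgroup (hn : 3 ≤ n) :
    commutator Γ ≤ (singleEdgeSubgroup Γ (-1 : ZMod n)).comap Γ.subtype := by
  have h2 : (2 : ZMod n) ≠ 0 := by
    rw [← Nat.cast_ofNat, Ne, ZMod.natCast_eq_zero_iff]
    exact fun h => absurd (Nat.le_of_dvd two_pos h) (by omega)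
  rw [commutator_def, Subgroup.commutator_le]
  rintro p - q -
  refine ⟨[(0, q⁻¹), (-1, p⁻¹), (0, q), (-1, p)], ?_, ?_⟩
  · simp [ValidSeq]
  · funext x
    rw [edgeWord_commutator, map_commutatorElement, Subgroup.coe_subtype]
    by_cases hx : x = -1
    · simp [hx, edgeFactor]
    rw [Pi.mulSingle_eq_of_ne hx]
    by_cases hx0 : x = 0
    · have : edgeFactor (-1 : ZMod n) (p : Perm (Fin m)) x = 1 := by
        refine if_neg ?_
        rintro (h | h)
        exacts [hx h, h2 (by linear_combination h - hx0)]
      rw [this, commutatorElement_one_left]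
    · have : edgeFactor (0 : ZMod n) (q : Perm (Fin m)) x = 1 := by
        refine if_neg ?_
        rintro (h | h)
        exacts [hx0 h, hx (by linear_combination h)]
      rw [this, commutatorElement_one_right]

lemma swEquiv_of_mem_orbit_commutator (hn : 3 ≤ n) {i j : Fin m}
    (h : j ∈ MulAction.orbit (commutator Γ) i) :
    SwEquiv Γ (nearCycle n i j) (monoCycle n i) := by
  obtain ⟨g, rfl⟩ := h
  obtain ⟨L, hL, hg⟩ := commutator_le_comap_singleEdgeSubgroup hn (inv_mem g.2)
  refine ⟨L, hL, ?_⟩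
  rw [nearCycle, monoCycle, ECswitchSeq_cycleFromFn, hg]
  congr 1
  funext x
  by_cases hx : x = -1
  · simp [hx, Subgroup.smul_def, Perm.smul_def]
  · simp [hx]

lemma mem_orbit_commutator_of_swEquiv [NeZero n] (hn : 2 ∣ n) {i j : Fin m}
    (h : SwEquiv Γ (nearCycle n i j) (monoCycle n i)) :
    j ∈ MulAction.orbit (commutator Γ) i := by
  obtain ⟨L, hL, hEq⟩ := h
  obtain ⟨L, rfl⟩ := exists_map_subtype_eq_of_validSeq hL
  have hcol : ∀ x, ((edgeWord L x : Γ) : Perm (Fin m)) (if x = -1 then j else i) = i := by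
    rw [nearCycle, monoCycle, ECswitchSeq_cycleFromFn] at hEq
    intro x
    have hx := congrFun (cycleFromFn_injective hEq) x
    simp only [edgeWord_map] at hx
    exact hx
  have hsup : edgeWord L (-1) ∈ MulAction.stabilizer Γ i ⊔ commutator Γ :=
    mem_sup_commutator_of_prod_zpow_eq_one (isUnit_altSign hn _)
      (fun x hx => by simpa [hx, Subgroup.smul_def, Perm.smul_def] using hcol x)
      (prod_edgeWord_zpow_altSign hn _ L)
  obtain ⟨a, ha, b, hb, hab⟩ := Subgroup.mem_sup_of_normal_right.mp hsup
  have hbj : (b : Perm (Fin m)) j = i := by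
    have h := hcol (-1)
    rw [if_pos rfl, ← hab, Subgroup.coe_mul, Perm.mul_apply] at h
    rw [MulAction.mem_stabilizer_iff, Subgroup.smul_def, Perm.smul_def] at ha
    exact (a : Perm (Fin m)).injective (h.trans ha.symm)
  refine ⟨⟨b, hb⟩⁻¹, ?_⟩
  simp [Subgroup.smul_def, Perm.smul_def, ← hbj]

lemma swEquiv_nearCycle_monoCycle_iff (hn : 2 ∣ n) (hn3 : 3 ≤ n) {i j : Fin m} :
    SwEquiv Γ (nearCycle n i j) (monoCycle n i) ↔ j ∈ MulAction.orbit (commutator Γ) i :=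
  have : NeZero n := ⟨by omega⟩
  ⟨mem_orbit_commutator_of_swEquiv hn, swEquiv_of_mem_orbit_commutator hn3⟩

end Orbit

end CycleSwitching

theorem sim2k_equivalence_general {m : ℕ} (Γ : Subgroup (Perm (Fin m)))
    (k : ℕ) (hk : 2 ≤ k) :
    Equivalence (fun j i : Fin m =>
      SwEquiv Γ (nearCycle (2 * k) i j) (monoCycle (2 * k) i)) := by
  have hn : 3 ≤ 2 * k := by omega
  simp only [CycleSwitching.swEquiv_nearCycle_monoCycle_iff (dvd_mul_right 2 k) hn]
  exact (MulAction.orbitRel (commutator Γ) (Fin m)).iseqv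

/-- For each even cycle length `2k ≥ 4`, the relation `j ∼_{2k} i`
("the nearly monochromatic cycle of colours `(i,j)` of length `2k` is `Γ`-switch
equivalent to the monochromatic cycle of colour `i`") is an equivalence relation
on `[m]`. -/
theorem sim2k_equivalence {m : ℕ} (Γ : Subgroup (Perm (Fin m))) (htr : TransOn Γ)
    (k : ℕ) (hk : 2 ≤ k) :
    Equivalence (fun j i : Fin m =>
      SwEquiv Γ (nearCycle (2 * k) i j) (monoCycle (2 * k) i)) :=
  sim2k_equivalence_general Γ k hk
end

section
/- The Γ-substitution classes are independent of even cycle length: for every i ∈ [m] and all integers l, k ≥ 2, the equivalence class ⟨i⟩^{2l} = {j : j ∼_{2l} i} equals ⟨i⟩^{2k}, where j ∼_{2k} i means that a cycle of length 2k that is nearly monochromatic of colours (i,j) can be switched to be monochromatic of colour i. -/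
open Equiv

/-!
Record a colouring of the `n`-cycle as `c : ZMod n → Fin m`, `c x` being the colour of the edge
from `x` to `x + 1`; switching at `v` with `π` applies `π` to the two edges `v - 1` and `v`.

Four switches at the two ends of an edge, by `b⁻¹, a⁻¹, b, a`, recolour that edge alone by
`⁅a, b⁆`, so every element of the commutator subgroup `Γ'` can be applied to a single edge. Hence
if `γ j = i` for some `γ ∈ Γ'`, the nearly monochromatic cycle of colours `(i, j)` switches to the
monochromatic one.

Conversely, for `n` even call a colouring balanced if there are `w x ∈ Γ` with `w x (c x) = i`
such that the alternating product `∏ (w x)^(±1)` in the abelianization of `Γ` lies in the image of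
the stabilizer of `i`. A switch at `v` by `π` is absorbed by replacing `w` by `w π⁻¹` on the edges
`v - 1` and `v`, which carry opposite signs, so balance is invariant. The monochromatic cycle is
balanced, and balance of the nearly monochromatic one forces `w (-1) = h γ` with `h` fixing `i`
and `γ ∈ Γ'`, whence `γ j = i`.

So for every even `n ≥ 4` the class is `{j | ∃ γ ∈ Γ', γ j = i}`, which does not depend on `n`.
-/

open Function Relation

namespace CycleColouring

variable {m n : ℕ}

section Switching

def switch (c : ZMod n → Fin m) (v : ZMod n) (π : Perm (Fin m)) : ZMod n → Fin m :=
  fun x => if x = v ∨ x + 1 = v then π (c x) else c x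

theorem ECswitch_cycleFromFn (c : ZMod n → Fin m) (v : ZMod n) (π : Perm (Fin m)) :
    ECswitch (cycleFromFn n c) v π = cycleFromFn n (switch c v π) := by
  funext x y
  simp only [ECswitch, cycleFromFn, switch]
  by_cases hy : y = x + 1
  · subst hy
    by_cases hx : x = v ∨ x + 1 = v <;> simp [hx]
  · by_cases hx : x = y + 1
    · subst hx
      by_cases hv : y = v ∨ y + 1 = v <;> simp [hy, hv, or_comm]
    · simp [hy, hx]

theorem cycleFromFn_injective : Injective (cycleFromFn (m := m) n) := fun c c' h => by
  funext x
  simpa [cycleFromFn] using congrFun (congrFun h x) (x + 1)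

theorem switch_switch_inv (c : ZMod n → Fin m) (v : ZMod n) (π : Perm (Fin m)) :
    switch (switch c v π) v π⁻¹ = c := by
  funext x
  by_cases h : x = v ∨ x + 1 = v <;> simp [switch, h]

def Move (Γ : Subgroup (Perm (Fin m))) (c c' : ZMod n → Fin m) : Prop :=
  ∃ v, ∃ π : Γ, c' = switch c v π

instance (Γ : Subgroup (Perm (Fin m))) : Std.Symm (Move (n := n) Γ) where
  symm := by
    rintro c _ ⟨v, π, rfl⟩
    exact ⟨v, π⁻¹, (switch_switch_inv c v π).symm⟩

theorem swEquiv_cycleFromFn_iff (Γ : Subgroup (Perm (Fin m))) (c c' : ZMod n → Fin m) :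
    SwEquiv Γ (cycleFromFn n c) (cycleFromFn n c') ↔ ReflTransGen (Move Γ) c c' := by
  constructor
  · rintro ⟨L, hL, hG⟩
    induction L generalizing c with
    | nil => exact cycleFromFn_injective hG ▸ .refl
    | cons p L ih =>
      rw [ECswitchSeq, ECswitch_cycleFromFn] at hG
      exact .head ⟨p.1, ⟨p.2, hL p List.mem_cons_self⟩, rfl⟩
        (ih _ (fun q hq => hL q (List.mem_cons_of_mem _ hq)) hG)
  · intro h
    induction h using ReflTransGen.head_induction_on with
    | refl => exact ⟨[], by simp [ValidSeq], rfl⟩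
    | head hmove _ ih =>
      obtain ⟨v, π, rfl⟩ := hmove
      obtain ⟨L, hL, hG⟩ := ih
      refine ⟨(v, π) :: L, ?_, by rwa [ECswitchSeq, ECswitch_cycleFromFn]⟩
      rintro q (_ | ⟨_, hq⟩)
      exacts [π.2, hL q hq]

end Switching

section Commutators

open scoped commutatorElement

theorem switch_commutator {e : ZMod n} (h1 : (1 : ZMod n) ≠ 0) (h2 : (2 : ZMod n) ≠ 0)
    (c : ZMod n → Fin m) (a b : Perm (Fin m)) :
    switch (switch (switch (switch c e b⁻¹) (e + 1) a⁻¹) e b) (e + 1) a =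
      update c e (⁅a, b⁆ (c e)) := by
  funext x
  simp only [switch, update_apply, commutatorElement_def, Perm.mul_apply, add_left_inj]
  by_cases hx : x = e
  · subst hx
    simp [h1]
  · have : x + 1 = e → x ≠ e + 1 := by
      rintro rfl h
      exact h2 (by linear_combination -h)
    by_cases hx' : x + 1 = e <;> by_cases hx'' : x = e + 1 <;> simp_all

def edgeRecolouring (Γ : Subgroup (Perm (Fin m))) (e : ZMod n) : Subgroup Γ where
  carrier := {γ | ∀ c, ReflTransGen (Move Γ) c (update c e ((γ : Perm (Fin m)) (c e)))}
  one_mem' c := by simpa using ReflTransGen.refl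
  mul_mem' {a b} ha hb c := by simpa using (hb c).trans (ha _)
  inv_mem' {a} ha c := by
    refine symm_of (ReflTransGen (Move Γ)) ?_
    simpa using ha (update c e (((a⁻¹ : Γ) : Perm (Fin m)) (c e)))

theorem commutator_le_edgeRecolouring (Γ : Subgroup (Perm (Fin m))) (hn : 2 < n)
    (e : ZMod n) : commutator Γ ≤ edgeRecolouring Γ e := by
  have : Fact (1 < n) := ⟨by omega⟩
  have h2 : (2 : ZMod n) ≠ 0 := by
    rw [← Nat.cast_ofNat, Ne, ZMod.natCast_eq_zero_iff]
    exact fun h => absurd (Nat.le_of_dvd two_pos h) (by omega)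
  rw [commutator_def, Subgroup.commutator_le]
  intro a _ b _ c
  have hcoe : ((⁅a, b⁆ : Γ) : Perm (Fin m)) = ⁅(a : Perm (Fin m)), (b : Perm (Fin m))⁆ := by
    simp [commutatorElement_def]
  rw [hcoe, ← switch_commutator one_ne_zero h2]
  exact .head ⟨e, b⁻¹, rfl⟩ <| .head ⟨e + 1, a⁻¹, rfl⟩ <| .head ⟨e, b, rfl⟩ <|
    .single ⟨e + 1, a, rfl⟩

end Commutators

section AlternatingProduct

variable {G : Type*} [CommGroup G]

def altSign (x : ZMod n) : ℤ := (-1) ^ x.val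

theorem altSign_add_one [NeZero n] (hn : Even n) (x : ZMod n) :
    altSign (x + 1) = -altSign x := by
  have : Fact (1 < n) := ⟨by obtain ⟨k, rfl⟩ := hn; have := NeZero.ne (k + k); omega⟩
  have hmod (a : ℕ) : (-1 : ℤ) ^ (a % n) = (-1) ^ a := by
    conv_rhs => rw [← Nat.mod_add_div a n, pow_add, pow_mul, hn.neg_one_pow, one_pow, mul_one]
  rw [altSign, altSign, ZMod.val_add, ZMod.val_one, hmod, pow_succ, mul_neg_one]

theorem altSign_neg_one [NeZero n] (hn : Even n) : altSign (-1 : ZMod n) = -1 := by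
  have := altSign_add_one hn (-1)
  rw [neg_add_cancel, altSign, ZMod.val_zero, pow_zero] at this
  linarith

def altProd [NeZero n] (f : ZMod n → G) : G :=
  ∏ x, f x ^ altSign x

theorem altProd_mul [NeZero n] (f g : ZMod n → G) :
    altProd (f * g) = altProd f * altProd g := by
  simp only [altProd, Pi.mul_apply, mul_zpow, Finset.prod_mul_distrib]

theorem altProd_adjacent [NeZero n] (hn : Even n) (v : ZMod n) (a : G) :
    altProd (fun x => if x = v ∨ x + 1 = v then a else 1) = 1 := by
  have hv : v - 1 + 1 = v := sub_add_cancel v 1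
  have hne : v ≠ v - 1 := by
    intro h
    have := altSign_add_one hn (v - 1)
    rw [hv, ← h] at this
    exact pow_ne_zero _ (by norm_num) (by linarith : altSign v = 0)
  rw [altProd, Fintype.prod_eq_mul v (v - 1) hne]
  · simp only [true_or, hv, or_true, if_true, ← zpow_add]
    nth_rw 1 [← hv]
    rw [altSign_add_one hn, neg_add_cancel, zpow_zero]
  · rintro x ⟨hxv, hxv'⟩
    rw [if_neg (by rintro (h | h); exacts [hxv h, hxv' (eq_sub_of_add_eq h)]), one_zpow]

end AlternatingProduct

section Balance

variable [NeZero n] {Γ : Subgroup (Perm (Fin m))} {i : Fin m}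

open Abelianization MulAction

variable (Γ i) in
def IsBalanced (c : ZMod n → Fin m) : Prop :=
  ∃ w : ZMod n → Γ, (∀ x, (w x : Perm (Fin m)) (c x) = i) ∧
    altProd (fun x => of (w x)) ∈ (stabilizer Γ i).map of

theorem isBalanced_const : IsBalanced Γ i (fun _ : ZMod n => i) :=
  ⟨1, fun _ => rfl, by simp [altProd]⟩

theorem IsBalanced.switch (hn : Even n) {c : ZMod n → Fin m} (hc : IsBalanced Γ i c)
    (v : ZMod n) (π : Γ) : IsBalanced Γ i (switch c v π) := by
  obtain ⟨w, hw, hprod⟩ := hc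
  refine ⟨fun x => w x * if x = v ∨ x + 1 = v then π⁻¹ else 1, fun x => ?_, ?_⟩
  · by_cases hx : x = v ∨ x + 1 = v <;> simp [CycleColouring.switch, hx, hw]
  · have : (fun x => of (w x * if x = v ∨ x + 1 = v then π⁻¹ else 1)) =
        (fun x => of (w x)) * fun x => if x = v ∨ x + 1 = v then of π⁻¹ else 1 := by
      funext x
      by_cases hx : x = v ∨ x + 1 = v <;> simp [hx]
    rwa [this, altProd_mul, altProd_adjacent hn, mul_one]

theorem IsBalanced.of_reflTransGen (hn : Even n) {c c' : ZMod n → Fin m}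
    (h : ReflTransGen (Move Γ) c c') (hc : IsBalanced Γ i c) : IsBalanced Γ i c' := by
  induction h with
  | refl => exact hc
  | tail _ hmove ih =>
    obtain ⟨v, π, rfl⟩ := hmove
    exact ih.switch hn v π

theorem IsBalanced.exists_mem_commutator (hn : Even n) {j : Fin m}
    (h : IsBalanced Γ i (fun x : ZMod n => if x = -1 then j else i)) :
    ∃ γ ∈ commutator Γ, (γ : Perm (Fin m)) j = i := by
  obtain ⟨w, hw, hprod⟩ := h
  set H := (stabilizer Γ i).map of
  have hstab (x : ZMod n) (hx : x ≠ -1) : w x ∈ stabilizer Γ i := by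
    simpa [hx, Subgroup.smul_def] using hw x
  have hlast : of (w (-1)) ∈ H := by
    rw [altProd, ← Finset.mul_prod_erase _ _ (Finset.mem_univ (-1)), altSign_neg_one hn,
      zpow_neg_one] at hprod
    refine inv_mem_iff.mp ((H.mul_mem_cancel_right (H.prod_mem fun x hx => ?_)).mp hprod)
    exact H.zpow_mem (Subgroup.mem_map_of_mem _ (hstab x (Finset.ne_of_mem_erase hx))) _
  obtain ⟨h, hh, hof⟩ := hlast
  refine ⟨h⁻¹ * w (-1), ?_, ?_⟩
  · rw [← ker_of, MonoidHom.mem_ker, map_mul, map_inv, hof, inv_mul_cancel]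
  · have hhi : (h : Perm (Fin m)) i = i := by simpa [Subgroup.smul_def] using hh
    have hj : (w (-1) : Perm (Fin m)) j = i := by simpa using hw (-1)
    simpa [hj] using (Perm.eq_inv_iff_eq.mpr hhi).symm

end Balance

end CycleColouring

open CycleColouring in
theorem swEquiv_nearCycle_monoCycle_iff {m n : ℕ} (Γ : Subgroup (Perm (Fin m))) (i j : Fin m)
    (hn : Even n) (hn' : 2 < n) :
    SwEquiv Γ (nearCycle n i j) (monoCycle n i) ↔
      ∃ γ ∈ commutator Γ, (γ : Perm (Fin m)) j = i := by
  have : NeZero n := ⟨by omega⟩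
  rw [nearCycle, monoCycle, swEquiv_cycleFromFn_iff]
  constructor
  · intro h
    exact (isBalanced_const.of_reflTransGen hn (symm_of _ h)).exists_mem_commutator hn
  · rintro ⟨γ, hγ, hγj⟩
    convert commutator_le_edgeRecolouring Γ hn' (-1) hγ (fun x => if x = -1 then j else i)
      using 1
    funext x
    by_cases hx : x = -1 <;> simp [hx, hγj]

theorem subclass_length_independent_general {m : ℕ} (Γ : Subgroup (Perm (Fin m)))
    (i : Fin m) (l k : ℕ) (hl : 2 ≤ l) (hk : 2 ≤ k) :
    {j : Fin m | SwEquiv Γ (nearCycle (2 * l) i j) (monoCycle (2 * l) i)} =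
    {j : Fin m | SwEquiv Γ (nearCycle (2 * k) i j) (monoCycle (2 * k) i)} := by
  ext j
  exact (swEquiv_nearCycle_monoCycle_iff Γ i j (even_two_mul l) (by omega)).trans
    (swEquiv_nearCycle_monoCycle_iff Γ i j (even_two_mul k) (by omega)).symm

/-- The `Γ`-substitution classes are independent of the (even) cycle
length: `⟨i⟩^{2l} = ⟨i⟩^{2k}` for all `l, k ≥ 2`. -/
theorem subclass_length_independent {m : ℕ} (Γ : Subgroup (Perm (Fin m)))
    (htr : TransOn Γ) (i : Fin m) (l k : ℕ) (hl : 2 ≤ l) (hk : 2 ≤ k) :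
    {j : Fin m | SwEquiv Γ (nearCycle (2 * l) i j) (monoCycle (2 * l) i)} =
    {j : Fin m | SwEquiv Γ (nearCycle (2 * k) i j) (monoCycle (2 * k) i)} :=
  subclass_length_independent_general Γ i l k hl hk
end

section
/- (Hell) Let G be a connected bipartite graph and P a shortest path between two vertices u and v of G. Then G admits a retraction to P, i.e., a graph homomorphism r: G → P with r(x) = x for every vertex x of P. -/
open Equiv

/-!
Send a vertex `x` to the vertex of `P` at position `d(u, x)`, where positions beyond the
length `n` of `P` are folded back onto `n - 1` and `n` according to parity. Bipartiteness makes
the distances from `u` of adjacent vertices differ by exactly one, folding preserves this, so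
every edge lands on an edge of `P`; since `P` is a shortest path, its `k`-th vertex is at
distance `k` from `u` and hence fixed.
-/

open SimpleGraph

def pathFold (n k : ℕ) : ℕ :=
  if k ≤ n then k else if (k - n) % 2 = 0 then n else n - 1

lemma pathFold_of_le {n k : ℕ} (h : k ≤ n) : pathFold n k = k := if_pos h

lemma pathFold_le (n k : ℕ) : pathFold n k ≤ n := by
  unfold pathFold; split_ifs <;> omega

lemma pathFold_adj {n i j : ℕ} (hn : 0 < n) (hij : j = i + 1 ∨ i = j + 1) :
    pathFold n j = pathFold n i + 1 ∨ pathFold n i = pathFold n j + 1 := by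
  unfold pathFold; split_ifs <;> omega

namespace SimpleGraph

variable {V : Type*} {G : SimpleGraph V} {u v a b : V}

lemma Colorable.dist_ne_of_adj (hG : G.Colorable 2) (hua : G.Reachable u a) (hab : G.Adj a b) :
    G.dist u a ≠ G.dist u b := by
  obtain ⟨p, hp⟩ := hua.exists_walk_length_eq_dist
  obtain ⟨q, hq⟩ := (hua.trans hab.reachable).exists_walk_length_eq_dist
  have hloop := two_colorable_iff_forall_loop_even.mp hG u ((p.concat hab).append q.reverse)
  rw [Walk.length_append, Walk.length_concat, Walk.length_reverse, hp, hq] at hloop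
  intro h
  rw [h, Nat.even_add, Nat.even_add_one] at hloop
  tauto

lemma Colorable.dist_eq_add_one_or_of_adj (hG : G.Colorable 2) (hua : G.Reachable u a)
    (hab : G.Adj a b) : G.dist u b = G.dist u a + 1 ∨ G.dist u a = G.dist u b + 1 := by
  have := hG.dist_ne_of_adj hua hab
  rcases hab.diff_dist_adj (u := u) with h | h | h <;> omega

namespace Walk

lemma dist_getVert_of_length_eq_dist (p : G.Walk u v) (hp : p.length = G.dist u v) {k : ℕ}
    (hk : k ≤ p.length) : G.dist u (p.getVert k) = k := by
  rw [← length_eq_dist_of_subwalk hp (p.isSubwalk_take k), take_length]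
  exact min_eq_left hk

lemma exists_mem_darts_of_getVert_succ (p : G.Walk u v) {i : ℕ} (hi : i < p.length) :
    ∃ d ∈ p.darts, d.toProd = (p.getVert i, p.getVert (i + 1)) := by
  have hi' : i < p.darts.length := by rwa [length_darts]
  exact ⟨_, List.getElem_mem hi', by rw [darts_getElem_eq_getVert i hi']⟩

lemma exists_mem_darts_of_getVert_adj (p : G.Walk u v) {i j : ℕ} (hi : i ≤ p.length)
    (hj : j ≤ p.length) (hij : j = i + 1 ∨ i = j + 1) :
    ∃ d ∈ p.darts, d.toProd = (p.getVert i, p.getVert j) ∨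
      d.toProd = (p.getVert j, p.getVert i) := by
  rcases hij with rfl | rfl
  · obtain ⟨d, hd, hd'⟩ := p.exists_mem_darts_of_getVert_succ (i := i) (by omega)
    exact ⟨d, hd, .inl hd'⟩
  · obtain ⟨d, hd, hd'⟩ := p.exists_mem_darts_of_getVert_succ (i := j) (by omega)
    exact ⟨d, hd, .inr hd'⟩

end Walk

end SimpleGraph

theorem hell_retraction_general {V : Type} (G : SimpleGraph V) (hconn : G.Connected)
    (hbip : G.Colorable 2) {u v : V} (hne : u ≠ v) (p : G.Walk u v)
    (hsp : p.length = G.dist u v) :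
    ∃ r : V → V, (∀ x ∈ p.support, r x = x) ∧
      ∀ a b, G.Adj a b →
        ∃ d ∈ p.darts, d.toProd = (r a, r b) ∨ d.toProd = (r b, r a) := by
  have hn : 0 < p.length := hsp ▸ hconn.pos_dist_of_ne hne
  refine ⟨fun x => p.getVert (pathFold p.length (G.dist u x)), fun x hx => ?_, fun a b hab => ?_⟩
  · obtain ⟨k, rfl, hk⟩ := Walk.mem_support_iff_exists_getVert.mp hx
    simp only [p.dist_getVert_of_length_eq_dist hsp hk, pathFold_of_le hk]
  · exact p.exists_mem_darts_of_getVert_adj (pathFold_le _ _) (pathFold_le _ _)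
      (pathFold_adj hn (hbip.dist_eq_add_one_or_of_adj (hconn u a) hab))

/-- **Hell.** A connected bipartite graph retracts onto any shortest path
between two of its vertices. -/
theorem hell_retraction {V : Type} (G : SimpleGraph V) (hconn : G.Connected)
    (hbip : G.Colorable 2) {u v : V} (hne : u ≠ v) (p : G.Walk u v) (hp : p.IsPath)
    (hsp : p.length = G.dist u v) :
    ∃ r : V → V, (∀ x ∈ p.support, r x = x) ∧
      ∀ a b, G.Adj a b →
        ∃ d ∈ p.darts, d.toProd = (r a, r b) ∨ d.toProd = (r b, r a) :=
  hell_retraction_general G hconn hbip hne p hsp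
end

section
/- Let G be a connected m-edge-coloured graph, Γ ≤ S_m transitive, and i ∈ [m]. Then G admits a Γ-switchable homomorphism to K_2^i if and only if G is bipartite and for every spanning tree T of G there exists a switching sequence Σ such that in G^Σ the tree T is monochromatic of colour i and the colour of every cotree edge lies in the Γ-substitution class ⟨i⟩. -/
open Equiv

/-!
Switching at a vertex applies the same permutation to all incident edges, so in an abelian
quotient of `Γ` the total switch applied to an edge `xy` is the product of a contribution of `x`
and one of `y`. Let `N` be the subgroup of `Γ` generated by the stabiliser of `i` and the
commutators, and send a colour `c` to the class in `Γ / N` of any `g ∈ Γ` with `g i = c`. Around a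
4-cycle the alternating product of these classes is invariant under switching, so every colour of
`⟨i⟩` has trivial class, i.e. lies in the `N`-orbit of `i`. Conversely, every element of `N` can be
applied to one edge `uv` while all other edges receive elements of the stabiliser of `i`: the
commutator `⁅a, b⁆` comes from switching `u` by `b⁻¹`, `v` by `a⁻¹`, `u` by `b` and `v` by `a`.
So once a spanning tree is monochromatic of colour `i` and the cotree colours lie in `⟨i⟩`, the
edges can be recoloured `i` one at a time.
-/
section EdgePerm
variable {V M : Type*} [DecidableEq V] [Monoid M]

def edgePerm : List (V × M) → V → V → M
  | [], _, _ => 1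
  | (w, π) :: L, x, y => edgePerm L x y * if x = w ∨ y = w then π else 1

lemma edgePerm_comm (L : List (V × M)) (x y : V) : edgePerm L x y = edgePerm L y x := by
  induction L with
  | nil => rfl
  | cons p L ih => simp only [edgePerm, ih, or_comm]

lemma edgePerm_append (L₁ L₂ : List (V × M)) (x y : V) :
    edgePerm (L₁ ++ L₂) x y = edgePerm L₂ x y * edgePerm L₁ x y := by
  induction L₁ with
  | nil => simp [edgePerm]
  | cons p L ih => simp [edgePerm, ih, mul_assoc]

lemma map_edgePerm {N : Type*} [Monoid N] (f : M →* N) (L : List (V × M)) (x y : V) :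
    f (edgePerm L x y) = edgePerm (L.map (Prod.map id f)) x y := by
  induction L with
  | nil => simp [edgePerm]
  | cons p L ih => simp [edgePerm, ih, apply_ite f]

lemma edgePerm_eq_mul_of_ne {M : Type*} [CommMonoid M] (L : List (V × M)) {x y : V}
    (hxy : x ≠ y) : edgePerm L x y = edgePerm L x x * edgePerm L y y := by
  induction L with
  | nil => simp [edgePerm]
  | cons p L ih =>
    obtain ⟨w, π⟩ := p
    simp only [edgePerm, ih, or_self]
    by_cases hx : x = w
    · subst hx; simp [hxy.symm, mul_right_comm]
    · by_cases hy : y = w <;> simp [hx, hy, mul_assoc]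

end EdgePerm

section Switching
variable {V : Type} {m : ℕ}

section Valid
variable {Γ : Subgroup (Perm (Fin m))}

lemma ValidSeq.append {L₁ L₂ : List (V × Perm (Fin m))} (h₁ : ValidSeq Γ L₁)
    (h₂ : ValidSeq Γ L₂) : ValidSeq Γ (L₁ ++ L₂) := by
  simpa [ValidSeq, or_imp, forall_and] using And.intro h₁ h₂

lemma ValidSeq.exists_lift {L : List (V × Perm (Fin m))} (hL : ValidSeq Γ L) :
    ∃ L' : List (V × Γ), L'.map (Prod.map id Γ.subtype) = L :=
  ⟨L.attach.map fun p => (p.1.1, ⟨p.1.2, hL _ p.2⟩),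
    by simp [Function.comp_def, List.attach_map_subtype_val]⟩

end Valid

variable [DecidableEq V]

lemma ECswitchSeq_apply (G : EC V m) (L : List (V × Perm (Fin m))) (x y : V) :
    ECswitchSeq G L x y = (G x y).map (edgePerm L x y : Perm (Fin m)) := by
  induction L generalizing G with
  | nil => simp [ECswitchSeq, edgePerm]
  | cons p L ih =>
    obtain ⟨w, π⟩ := p
    rw [ECswitchSeq, ih, ECswitch, edgePerm]
    split_ifs <;> simp [Option.map_map]

lemma ECswitchSeq_append (G : EC V m) (L₁ L₂ : List (V × Perm (Fin m))) :
    ECswitchSeq G (L₁ ++ L₂) = ECswitchSeq (ECswitchSeq G L₁) L₂ := by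
  induction L₁ generalizing G with
  | nil => rfl
  | cons p L ih => exact ih _

lemma isSome_ECswitchSeq (G : EC V m) (L : List (V × Perm (Fin m))) (x y : V) :
    (ECswitchSeq G L x y).isSome = (G x y).isSome := by
  rw [ECswitchSeq_apply, Option.isSome_map]

lemma ECSymm.switchSeq {G : EC V m} (hG : ECSymm G) (L : List (V × Perm (Fin m))) :
    ECSymm (ECswitchSeq G L) := fun x y => by
  rw [ECswitchSeq_apply, ECswitchSeq_apply, hG, edgePerm_comm]

lemma ECswitchSeq_self_eq_none {G : EC V m} {x : V} (hx : G x x = none)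
    (L : List (V × Perm (Fin m))) : ECswitchSeq G L x x = none := by
  rw [ECswitchSeq_apply, hx, Option.map_none]

lemma ValidSeq.edgePerm_mem {Γ : Subgroup (Perm (Fin m))} {L : List (V × Perm (Fin m))}
    (hL : ValidSeq Γ L) (x y : V) : edgePerm L x y ∈ Γ := by
  obtain ⟨L', rfl⟩ := hL.exists_lift
  rw [← map_edgePerm]
  exact (edgePerm L' x y).2

end Switching

section Quotient
variable {m : ℕ} (Γ : Subgroup (Perm (Fin m))) (i : Fin m)

def stabSupCommutator : Subgroup Γ := MulAction.stabilizer Γ i ⊔ commutator Γ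

-- This is `Γ ⧸ stabSupCommutator Γ i`, built from the abelianisation so that it is a `CommGroup`.
abbrev StabQuotient := Abelianization Γ ⧸ (MulAction.stabilizer Γ i).map Abelianization.of

def toStabQuotient : Γ →* StabQuotient Γ i :=
  (QuotientGroup.mk' _).comp Abelianization.of

lemma toStabQuotient_eq_one_iff {g : Γ} :
    toStabQuotient Γ i g = 1 ↔ g ∈ stabSupCommutator Γ i := by
  rw [toStabQuotient, MonoidHom.comp_apply, QuotientGroup.mk'_apply, QuotientGroup.eq_one_iff,
    ← Subgroup.mem_comap, Subgroup.comap_map_eq, Abelianization.ker_of, stabSupCommutator]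

variable {Γ} (htr : TransOn Γ)

noncomputable def transRep (c : Fin m) : Γ := ⟨(htr i c).choose, (htr i c).choose_spec.1⟩

lemma transRep_smul (c : Fin m) : transRep i htr c • i = c := (htr i c).choose_spec.2

noncomputable def colourClass (c : Fin m) : StabQuotient Γ i :=
  toStabQuotient Γ i (transRep i htr c)

lemma colourClass_smul (g : Γ) (c : Fin m) :
    colourClass i htr (g • c) = toStabQuotient Γ i g * colourClass i htr c := by
  have hstab :
      (transRep i htr (g • c))⁻¹ * (g * transRep i htr c) ∈ MulAction.stabilizer Γ i := by
    rw [MulAction.mem_stabilizer_iff, mul_smul, mul_smul, transRep_smul,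
      inv_smul_eq_iff, transRep_smul]
  have h := (toStabQuotient_eq_one_iff Γ i).2 (Subgroup.mem_sup_left hstab)
  rw [map_mul, map_mul, map_inv, inv_mul_eq_one] at h
  unfold colourClass
  exact h

lemma colourClass_self : colourClass i htr i = 1 :=
  (toStabQuotient_eq_one_iff Γ i).2 (Subgroup.mem_sup_left (transRep_smul i htr i))

lemma mem_orbit_of_colourClass_eq_one {c : Fin m} (hc : colourClass i htr c = 1) :
    c ∈ MulAction.orbit (stabSupCommutator Γ i) i :=
  ⟨⟨transRep i htr c, (toStabQuotient_eq_one_iff Γ i).1 hc⟩, transRep_smul i htr c⟩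

end Quotient

section Realization
open scoped commutatorElement

variable {V : Type} [DecidableEq V] {m : ℕ} (Γ : Subgroup (Perm (Fin m))) (i : Fin m)

def RealizableOn (u v : V) (w : Perm (Fin m)) : Prop :=
  ∃ L, ValidSeq Γ L ∧ edgePerm L u v = w ∧ ∀ x y, s(x, y) ≠ s(u, v) → edgePerm L x y i = i

variable {Γ i}

lemma RealizableOn.mul {u v : V} {w₁ w₂ : Perm (Fin m)} (h₁ : RealizableOn Γ i u v w₁)
    (h₂ : RealizableOn Γ i u v w₂) : RealizableOn Γ i u v (w₁ * w₂) := by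
  obtain ⟨L₁, hL₁, hw₁, hfix₁⟩ := h₁
  obtain ⟨L₂, hL₂, hw₂, hfix₂⟩ := h₂
  refine ⟨L₂ ++ L₁, hL₂.append hL₁, by rw [edgePerm_append, hw₁, hw₂], fun x y hxy => ?_⟩
  rw [edgePerm_append, Perm.mul_apply, hfix₂ x y hxy, hfix₁ x y hxy]

lemma realizableOn_of_apply_eq (u v : V) {π : Perm (Fin m)} (hπ : π ∈ Γ) (hπi : π i = i) :
    RealizableOn Γ i u v π := by
  refine ⟨[(u, π)], by simpa [ValidSeq] using hπ, by simp [edgePerm], fun x y _ => ?_⟩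
  simp only [edgePerm, one_mul]
  split_ifs <;> simp [hπi]

lemma realizableOn_commutator {u v : V} (huv : u ≠ v) {a b : Perm (Fin m)} (ha : a ∈ Γ)
    (hb : b ∈ Γ) : RealizableOn Γ i u v ⁅a, b⁆ := by
  refine ⟨[(u, b⁻¹), (v, a⁻¹), (u, b), (v, a)], ?_, ?_, fun x y hxy => ?_⟩
  · simp [ValidSeq, ha, hb]
  · simp [edgePerm, huv, huv.symm, commutatorElement_def, mul_assoc]
  · -- an edge other than `uv` meets at most one of `u`, `v`, where the switches cancel
    have : ¬ ((x = u ∨ y = u) ∧ (x = v ∨ y = v)) := by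
      rintro ⟨rfl | rfl, rfl | rfl⟩ <;> simp_all [Sym2.eq_swap]
    simp only [edgePerm, one_mul]
    by_cases hu : x = u ∨ y = u <;> by_cases hv : x = v ∨ y = v <;> simp_all

lemma realizableOn_of_mem {u v : V} (huv : u ≠ v) {w : Γ} (hw : w ∈ stabSupCommutator Γ i) :
    RealizableOn Γ i u v w := by
  rw [stabSupCommutator, commutator_eq_closure, ← (MulAction.stabilizer Γ i).closure_eq,
    ← Subgroup.closure_union] at hw
  induction hw using Subgroup.closure_induction'' with
  | mem g hg =>
    rcases hg with hg | ⟨a, b, rfl⟩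
    · exact realizableOn_of_apply_eq u v g.2 hg
    · exact realizableOn_commutator huv a.2 b.2
  | inv_mem g hg =>
    rcases hg with hg | ⟨a, b, rfl⟩
    · exact realizableOn_of_apply_eq u v g⁻¹.2 (inv_mem hg)
    · rw [commutatorElement_inv]
      exact realizableOn_commutator huv b.2 a.2
  | one => exact realizableOn_of_apply_eq u v Γ.one_mem rfl
  | mul g h _ _ hg hh => exact hg.mul hh

end Realization

section Fixing
variable {V : Type} [DecidableEq V] {m : ℕ} {Γ : Subgroup (Perm (Fin m))} {i : Fin m}
  {H : EC V m}

open MulAction in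
lemma exists_switch_fix_edge (hsym : ECSymm H) (hloop : ∀ x, H x x = none)
    (hcol : ∀ x y c, H x y = some c → c ∈ orbit (stabSupCommutator Γ i) i) (u v : V) :
    ∃ L, ValidSeq Γ L ∧ ∀ x y c, ECswitchSeq H L x y = some c →
      c ∈ orbit (stabSupCommutator Γ i) i ∧ ((x, y) = (u, v) ∨ H x y = some i → c = i) := by
  cases huv : H u v with
  | none =>
    refine ⟨[], fun _ h => absurd h List.not_mem_nil, fun x y c hc => ⟨hcol x y c hc, ?_⟩⟩
    rintro (hxy | hxy)
    · simp_all [ECswitchSeq]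
    · simpa [ECswitchSeq, hxy] using hc.symm
  | some c =>
    have hne : u ≠ v := by rintro rfl; simp [hloop] at huv
    obtain ⟨w, hw⟩ := hcol u v c huv
    obtain ⟨L, hL, hLuv, hfix⟩ := realizableOn_of_mem hne (w⁻¹).2
    refine ⟨L, hL, fun x y c' hc' => ?_⟩
    rw [ECswitchSeq_apply] at hc'
    obtain ⟨d, hd, rfl⟩ := Option.map_eq_some_iff.1 hc'
    by_cases hxy : s(x, y) = s(u, v)
    · have hsame : H x y = H u v ∧ edgePerm L x y = edgePerm L u v := by
        rcases Sym2.eq_iff.1 hxy with ⟨rfl, rfl⟩ | ⟨rfl, rfl⟩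
        · exact ⟨rfl, rfl⟩
        · exact ⟨hsym x y, edgePerm_comm L x y⟩
      rw [hsame.1, huv, Option.some_inj] at hd
      have hwc : edgePerm L u v c = i := by
        rw [hLuv, ← hw]
        exact inv_smul_smul w i
      rw [hsame.2, ← hd, hwc]
      exact ⟨mem_orbit_self i, fun _ => rfl⟩
    · have hstab : (⟨edgePerm L x y, hL.edgePerm_mem x y⟩ : Γ) ∈ stabSupCommutator Γ i :=
        Subgroup.mem_sup_left (hfix x y hxy)
      refine ⟨mem_orbit_of_mem_orbit (⟨_, hstab⟩ : stabSupCommutator Γ i) (hcol x y d hd), ?_⟩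
      rintro (hxy' | hxy')
      · simp_all
      · rw [Option.some_injective _ (hd.symm.trans hxy')]
        exact hfix x y hxy

open MulAction in
lemma exists_switch_mono [Fintype V] (hsym : ECSymm H) (hloop : ∀ x, H x x = none)
    (hcol : ∀ x y c, H x y = some c → c ∈ orbit (stabSupCommutator Γ i) i) :
    ∃ L, ValidSeq Γ L ∧ Mono (ECswitchSeq H L) i := by
  suffices h : ∀ F : Finset (V × V), ∃ L, ValidSeq Γ L ∧ ∀ x y c,
      ECswitchSeq H L x y = some c →
        c ∈ orbit (stabSupCommutator Γ i) i ∧ ((x, y) ∈ F → c = i) by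
    obtain ⟨L, hL, hF⟩ := h Finset.univ
    exact ⟨L, hL, fun x y c hc => (hF x y c hc).2 (Finset.mem_univ _)⟩
  intro F
  induction F using Finset.induction_on with
  | empty =>
    exact ⟨[], fun _ h => absurd h List.not_mem_nil, fun x y c hc => ⟨hcol x y c hc, by simp⟩⟩
  | insert p F _ ih =>
    obtain ⟨L₁, hL₁, hF⟩ := ih
    obtain ⟨L₂, hL₂, hp⟩ := exists_switch_fix_edge (hsym.switchSeq L₁)
      (fun x => ECswitchSeq_self_eq_none (hloop x) L₁) (fun x y c hc => (hF x y c hc).1) p.1 p.2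
    refine ⟨L₁ ++ L₂, hL₁.append hL₂, fun x y c hc => ?_⟩
    rw [ECswitchSeq_append] at hc
    refine ⟨(hp x y c hc).1, fun hxy => (hp x y c hc).2 ?_⟩
    rcases Finset.mem_insert.1 hxy with rfl | hxy
    · exact Or.inl rfl
    · obtain ⟨d, hd⟩ := Option.isSome_iff_exists.1 (by rw [← isSome_ECswitchSeq _ L₂, hc]; rfl)
      rw [hd, (hF x y d hd).2 hxy]
      exact Or.inr rfl

end Fixing

section Cycle
variable {m : ℕ} {Γ : Subgroup (Perm (Fin m))} {i : Fin m}

lemma cycleFromFn_apply_add_one (n : ℕ) (c : ZMod n → Fin m) (x : ZMod n) :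
    cycleFromFn n c x (x + 1) = some (c x) := by
  simp [cycleFromFn]

lemma self_mem_subClass (Γ : Subgroup (Perm (Fin m))) (i : Fin m) : i ∈ subClass Γ i :=
  ⟨[], fun _ h => absurd h List.not_mem_nil, by simp [ECswitchSeq, nearCycle, monoCycle]⟩

lemma colourClass_eq_one_of_mem_subClass (htr : TransOn Γ) {j : Fin m}
    (hj : j ∈ subClass Γ i) : colourClass i htr j = 1 := by
  obtain ⟨L, hL, hsw⟩ := hj
  obtain ⟨L', rfl⟩ := hL.exists_lift
  -- `A x` is the contribution of the vertex `x` to the switch applied to its edges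
  let A (x : ZMod 4) : StabQuotient Γ i :=
    edgePerm (L'.map (Prod.map id (toStabQuotient Γ i))) x x
  have hne : ∀ x : ZMod 4, x ≠ x + 1 := by decide
  have hedge (x y : ZMod 4) (hy : y = x + 1) :
      A x * A y * colourClass i htr (if x = -1 then j else i) = 1 := by
    subst hy
    have h := congrFun (congrFun hsw x) (x + 1)
    rw [ECswitchSeq_apply, nearCycle, monoCycle, cycleFromFn_apply_add_one,
      cycleFromFn_apply_add_one, Option.map_some, Option.some_inj, ← map_edgePerm] at h
    have h' : edgePerm L' x (x + 1) • (if x = -1 then j else i) = i := h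
    rw [← edgePerm_eq_mul_of_ne _ (hne x), ← map_edgePerm, ← colourClass_smul, h',
      colourClass_self]
  have h0 : A 0 * A 1 = 1 := by simpa +decide [colourClass_self] using hedge 0 1 (by decide)
  have h1 : A 1 * A 2 = 1 := by simpa +decide [colourClass_self] using hedge 1 2 (by decide)
  have h2 : A 2 * A 3 = 1 := by simpa +decide [colourClass_self] using hedge 2 3 (by decide)
  have h3 : A 3 * A 0 * colourClass i htr j = 1 := by simpa +decide using hedge 3 0 (by decide)
  rwa [eq_inv_of_mul_eq_one_right h2, eq_inv_of_mul_eq_one_right h1,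
    eq_inv_of_mul_eq_one_right h0, inv_inv, inv_mul_cancel, one_mul] at h3

end Cycle

section Graph
variable {V : Type} {m : ℕ} {G : EC V m}

lemma Bip.loopless (h : Bip G) (x : V) : G x x = none := by
  obtain ⟨f, hf⟩ := h
  exact Option.not_isSome_iff_eq_none.1 fun hx => hf x x hx rfl

lemma Conn.connected_ECtoSimple [Nonempty V] (h : Conn G) (hsym : ECSymm G) :
    (ECtoSimple G hsym).Connected := by
  refine (SimpleGraph.connected_iff _).2 ⟨fun a b => ?_, inferInstance⟩
  rw [SimpleGraph.reachable_iff_reflTransGen]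
  induction h a b with
  | refl => rfl
  | @tail x y _ hxy ih =>
    by_cases hne : x = y
    · exact hne ▸ ih
    · exact ih.tail ⟨hne, hxy⟩

lemma swHomK2_iff_bip_and_exists_mono [DecidableEq V] (Γ : Subgroup (Perm (Fin m))) (i : Fin m) :
    SwHomK2 Γ G i ↔ Bip G ∧ ∃ L, ValidSeq Γ L ∧ Mono (ECswitchSeq G L) i := by
  constructor
  · rintro ⟨L, hL, f, hf⟩
    refine ⟨⟨f, fun u v huv => ?_⟩, L, hL, fun u v j hj => (hf u v j hj).2⟩
    obtain ⟨j, hj⟩ := Option.isSome_iff_exists.1 ((isSome_ECswitchSeq G L u v).trans huv)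
    exact (hf u v j hj).1
  · rintro ⟨⟨f, hf⟩, L, hL, hmono⟩
    refine ⟨L, hL, f, fun u v j hj => ⟨hf u v ?_, hmono u v j hj⟩⟩
    rw [← isSome_ECswitchSeq G L, hj]
    rfl

end Graph

/-- A connected `m`-edge-coloured graph `G` admits a `Γ`-switchable
homomorphism to `K₂^i` iff `G` is bipartite and for every spanning tree `T` of `G` there
is a switching sequence making `T` monochromatic of colour `i` with every cotree edge
colour lying in the `Γ`-substitution class `⟨i⟩`. -/
theorem swhomK2_iff_spanning_tree {V : Type} [Fintype V] [DecidableEq V] {m : ℕ}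
    (Γ : Subgroup (Perm (Fin m))) (htr : TransOn Γ) (G : EC V m) (hsym : ECSymm G)
    (hconn : Conn G) (i : Fin m) :
    SwHomK2 Γ G i ↔
      (Bip G ∧ ∀ T : SimpleGraph V, T.IsTree → T ≤ ECtoSimple G hsym →
        ∃ L, ValidSeq Γ L ∧
          (∀ u v, T.Adj u v → ECswitchSeq G L u v = some i) ∧
          (∀ u v j, ¬ T.Adj u v → ECswitchSeq G L u v = some j → j ∈ subClass Γ i)) := by
  rw [swHomK2_iff_bip_and_exists_mono]
  refine and_congr_right fun hbip => ⟨?_, fun htree => ?_⟩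
  · rintro ⟨L, hL, hmono⟩ T _ hTG
    refine ⟨L, hL, fun u v huv => ?_, fun u v j _ hj => hmono u v j hj ▸ self_mem_subClass Γ i⟩
    obtain ⟨j, hj⟩ :=
      Option.isSome_iff_exists.1 ((isSome_ECswitchSeq G L u v).trans (hTG huv).2)
    rw [hj, hmono u v j hj]
  cases isEmpty_or_nonempty V
  · exact ⟨[], fun _ h => absurd h List.not_mem_nil, fun u => isEmptyElim u⟩
  obtain ⟨T, hTG, hT⟩ := (hconn.connected_ECtoSimple hsym).exists_isTree_le
  obtain ⟨L₁, hL₁, htreeCol, hcotreeCol⟩ := htree T hT hTG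
  obtain ⟨L₂, hL₂, hmono⟩ := exists_switch_mono (Γ := Γ) (i := i) (hsym.switchSeq L₁)
    (fun x => ECswitchSeq_self_eq_none (hbip.loopless x) L₁) fun u v c hc => by
      by_cases huv : T.Adj u v
      · rw [htreeCol u v huv, Option.some_inj] at hc
        exact hc ▸ MulAction.mem_orbit_self i
      · exact mem_orbit_of_colourClass_eq_one i htr
          (colourClass_eq_one_of_mem_subClass htr (hcotreeCol u v c huv hc))
  exact ⟨L₁ ++ L₂, hL₁.append hL₂, by rwa [ECswitchSeq_append]⟩
end
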